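/- Archimedes' theorem (green): for any triangle A1A2A3 in the plane over a field, with green quadrances Q1, Q2, Q3, one has (Q1+Q2+Q3)² − 2(Q1²+Q2²+Q3²) = −4D², where D = (x2−x1)(y3−y1) − (x3−x1)(y2−y1). -/

import Mathlib

/-- Green quadrance between two points. -/
def Qg {F : Type*} [Field F] (X Y : F × F) : F :=
  2 * (Y.1 - X.1) * (Y.2 - X.2)

/-- Archimedes' theorem (green): the Archimedes function of the green
quadrances of a triangle equals `-4D²` where `D` is twice the signed area. -/
theorem green_archimedes {F : Type*} [Field F] (A1 A2 A3 : F × F) :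
    (Qg A2 A3 + Qg A1 A3 + Qg A1 A2) ^ 2
        - 2 * ((Qg A2 A3) ^ 2 + (Qg A1 A3) ^ 2 + (Qg A1 A2) ^ 2)
      = -(4 * ((A2.1 - A1.1) * (A3.2 - A1.2) - (A3.1 - A1.1) * (A2.2 - A1.2)) ^ 2) := by
  simp only [Qg]
  ring
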